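/- Let (X,d) be a compact metric space and μ a Borel probability measure on X satisfying the thin annuli condition (M.2) with constants α_0, ρ_0 > 0. Let α ∈ (0,1], let ε > 0, and let r : X → ℝ be Lipschitz with Lipschitz constant ≤ 1 and 0 < ε ≤ r(x) ≤ ρ_0 for all x ∈ supp μ. Then there exists an α-Hölder continuous function g : X × X → [0,1] (with respect to the max product metric) and a constant C depending only on (X,d,μ,α) such that: ‖g‖_α ≤ C/ε; 1_{B(x,r(x))}(y) ≤ g(x,y) ≤ 1_{B(x,r(x)+ε)}(y) for all x,y ∈ X; and | ∫_X g(x,y) dμ(y) − μ(B(x,r(x))) | ≤ C ε^{α_0} for all x ∈ supp μ. Alternatively, g may instead be chosen so that 1_{B(x,r(x)−ε)}(y) ≤ g(x,y) ≤ 1_{B(x,r(x))}(y) for all x,y ∈ X, with the same two other properties. -/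

import Mathlib

open MeasureTheory Metric Filter Set Asymptotics ProbabilityTheory
open scoped ENNReal NNReal Topology

noncomputable section

namespace Paper

variable {Y : Type*} [MetricSpace Y]

/-- The sup norm of a real-valued function. -/
def supNorm (f : Y → ℝ) : ℝ := ⨆ x, |f x|

/-- The `α`-Hölder seminorm (Hölder constant) `H_α(f)`. -/
def holderSemi (α : ℝ) (f : Y → ℝ) : ℝ :=
  sSup {c : ℝ | ∃ x y : Y, x ≠ y ∧ c = |f x - f y| / dist x y ^ α}

/-- The `α`-Hölder norm `‖f‖_α = sup|f| + H_α(f)`. -/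
def holderNorm (α : ℝ) (f : Y → ℝ) : ℝ := supNorm f + holderSemi α f

/-- `f` is `α`-Hölder continuous. -/
def IsHolderF (α : ℝ) (f : Y → ℝ) : Prop :=
  ∃ H : ℝ, 0 ≤ H ∧ ∀ x y, |f x - f y| ≤ H * dist x y ^ α

/-- Real-valued indicator function of a set. -/
def indic (A : Set Y) (x : Y) : ℝ := A.indicator (fun _ => (1 : ℝ)) x

/-- Condition (S_{γ,υ}): `a` takes values in `(0,1]`, is monotone decreasing, and
`c n^{-γ} ≤ a n ≤ C (log n)^{-υ}` for all `n ≥ 2`. -/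
def CondS (γ υ : ℝ) (a : ℕ → ℝ) : Prop :=
  (∀ n, 0 < a n ∧ a n ≤ 1) ∧ (∀ m n : ℕ, m ≤ n → a n ≤ a m) ∧
    ∃ c C : ℝ, 0 < c ∧ 0 < C ∧ ∀ n : ℕ, 2 ≤ n →
      c * (n : ℝ) ^ (-γ) ≤ a n ∧ a n ≤ C * Real.log n ^ (-υ)

/-- The standard normal cumulative distribution function `Φ`. -/
def stdNormalCDF (t : ℝ) : ℝ :=
  (Real.sqrt (2 * Real.pi))⁻¹ * ∫ s in Set.Iic t, Real.exp (-(s ^ 2) / 2)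

variable [MeasurableSpace Y]

/-- Covariance of two observables. -/
def cov (μ : Measure Y) (f g : Y → ℝ) : ℝ :=
  (∫ x, f x * g x ∂μ) - (∫ x, f x ∂μ) * ∫ x, g x ∂μ

/-- Variance of an observable. -/
def var (μ : Measure Y) (f : Y → ℝ) : ℝ :=
  (∫ x, f x ^ 2 ∂μ) - (∫ x, f x ∂μ) ^ 2

/-- The (topological) support of a measure: points whose every ball has positive measure. -/
def measSupport (μ : Measure Y) : Set Y := {x | ∀ r : ℝ, 0 < r → 0 < μ (ball x r)}

/-- Condition (M.1) (Frostman property) with exponent `s₀`. -/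
def CondM1With (μ : Measure Y) (s₀ : ℝ) : Prop :=
  0 < s₀ ∧ ∃ C : ℝ, 0 < C ∧
    ∀ (x : Y) (r : ℝ), 0 < r → μ (ball x r) ≤ ENNReal.ofReal (C * r ^ s₀)

/-- Condition (M.1). -/
def CondM1 (μ : Measure Y) : Prop := ∃ s₀ : ℝ, CondM1With μ s₀

/-- Condition (M.2) (thin annuli) with constants `α₀`, `ρ₀`. -/
def CondM2With (μ : Measure Y) (α₀ ρ₀ : ℝ) : Prop :=
  0 < α₀ ∧ 0 < ρ₀ ∧ ∃ C : ℝ, 0 < C ∧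
    ∀ (x : Y) (ε r : ℝ), 0 < ε → ε ≤ r → r ≤ ρ₀ →
      μ (ball x (r + ε) \ ball x r) ≤ ENNReal.ofReal (C * ε ^ α₀)

/-- Condition (M.2). -/
def CondM2 (μ : Measure Y) : Prop := ∃ α₀ ρ₀ : ℝ, CondM2With μ α₀ ρ₀

/-- Condition (D.2) (decay of correlations) with a fixed decay rate `τ₀`. -/
def CondD2Rate (T : Y → Y) (μ : Measure Y) (τ₀ : ℝ) : Prop :=
  ∀ α : ℝ, α ∈ Set.Ioc (0 : ℝ) 1 → ∃ C : ℝ, 0 < C ∧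
    ∀ (n : ℕ) (φ ψ : Y → ℝ), IsHolderF α φ → IsHolderF α ψ →
      |cov μ φ (fun x => ψ (T^[n] x))| ≤
        C * holderNorm α φ * holderNorm α ψ * Real.exp (-τ₀ * n)

/-- Condition (D.2) (decay of correlations for Hölder observables). -/
def CondD2 (T : Y → Y) (μ : Measure Y) : Prop :=
  ∀ α : ℝ, α ∈ Set.Ioc (0 : ℝ) 1 → ∃ C τ₀ : ℝ, 0 < C ∧ 0 < τ₀ ∧
    ∀ (n : ℕ) (φ ψ : Y → ℝ), IsHolderF α φ → IsHolderF α ψ →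
      |cov μ φ (fun x => ψ (T^[n] x))| ≤
        C * holderNorm α φ * holderNorm α ψ * Real.exp (-τ₀ * n)

/-- The multiple-decorrelation inequality for families of Hölder observables, with
constant `r`, rate `τ` and polynomial `P`. -/
def MultiDecorrBound (T : Y → Y) (μ : Measure Y) (α r τ : ℝ) (P : Polynomial ℝ) : Prop :=
  ∀ (m m' : ℕ) (φ : Fin (m + 1) → Y → ℝ) (ψ : Fin (m' + 1) → Y → ℝ),
    (∀ i, IsHolderF α (φ i)) → (∀ j, IsHolderF α (ψ j)) →
    ∀ (k : Fin (m + 1) → ℕ) (l : Fin (m' + 1) → ℕ), Monotone k → Monotone l → ∀ N : ℕ,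
      cov μ (fun x => ∏ i, φ i (T^[k i] x)) (fun x => ∏ j, ψ j (T^[N + l j] x)) ≤
        ((∏ i, supNorm (φ i)) * ∏ j, supNorm (ψ j)
            + (∑ i, holderSemi α (φ i) *
                ((∏ i' ∈ Finset.univ.erase i, supNorm (φ i')) * ∏ j, supNorm (ψ j)))
            + ∑ j, holderSemi α (ψ j) *
                ((∏ i, supNorm (φ i)) * ∏ j' ∈ Finset.univ.erase j, supNorm (ψ j'))) *
          P.eval ((l (Fin.last m') : ℕ) : ℝ) *
          Real.exp (-τ * ((N : ℝ) - r * ((k (Fin.last m) : ℕ) : ℝ)))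

/-- Condition (D.3) (multiple decorrelation property). -/
def CondD3 (T : Y → Y) (μ : Measure Y) : Prop :=
  ∀ α : ℝ, α ∈ Set.Ioc (0 : ℝ) 1 →
    ∃ (r τ : ℝ) (P : Polynomial ℝ), 1 ≤ r ∧ 0 < τ ∧ (∀ i, 0 ≤ P.coeff i) ∧
      MultiDecorrBound T μ α r τ P

/-- `Pop` is (a version of) the transfer operator of `(X,T,μ)`. -/
def IsTransferOperator (T : Y → Y) (μ : Measure Y) (Pop : (Y → ℝ) → Y → ℝ) : Prop :=
  ∀ φ ψ : Y → ℝ, MemLp φ 2 μ → MemLp ψ 2 μ →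
    (∫ x, φ x * ψ (T x) ∂μ) = ∫ x, Pop φ x * ψ x ∂μ

/-- Condition (D.1): the transfer operator contracts Hölder norms of mean-zero
Hölder observables exponentially fast. -/
def CondD1 (μ : Measure Y) (Pop : (Y → ℝ) → Y → ℝ) : Prop :=
  ∀ α : ℝ, α ∈ Set.Ioc (0 : ℝ) 1 → ∃ C τ₀ : ℝ, 0 < C ∧ 0 < τ₀ ∧
    ∀ (n : ℕ) (φ : Y → ℝ), IsHolderF α φ → (∫ x, φ x ∂μ) = 0 →
      IsHolderF α (Pop^[n] φ) ∧
      holderNorm α (Pop^[n] φ) ≤ C * holderNorm α φ * Real.exp (-τ₀ * n)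

/-!
The approximant is the ramp `g (x, z) = max 0 (min 1 ((R x - d(x, z)) / ε))` with `R = r + ε`
(outer) or `R = r` (inner). It is `3/ε`-Lipschitz on `X × X`, hence `α`-Hölder with constant
`O(1/ε)` because `X` is bounded. Its integral over `z` is squeezed between the measures of two
concentric balls whose radii differ by `ε`, so the error is the measure of a thin annulus, which
(M.2) controls. For the inner approximation the annulus may reach the centre (when `r < 2ε`);
there it is covered by the dyadic annuli `B(x, r/2^k) \ B(x, r/2^(k+1))`, whose (M.2) bounds
form a geometric series of total `O(r^α₀) = O(ε^α₀)`.
-/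
section MeasSupport

variable {Y : Type*} [MetricSpace Y] [MeasurableSpace Y]

lemma measSupport_nonempty [SecondCountableTopology Y] {μ : Measure Y} (hμ : μ ≠ 0) :
    (measSupport μ).Nonempty := by
  by_contra hempty
  have hnull : ∀ x ∈ (univ : Set Y), ∃ u ∈ 𝓝[univ] x, μ u = 0 := fun x _ => by
    have hx : x ∉ measSupport μ := fun hx => hempty ⟨x, hx⟩
    simp only [measSupport, mem_ofPred_eq, not_forall, not_lt, nonpos_iff_eq_zero] at hx
    obtain ⟨r, hr, hball⟩ := hx
    exact ⟨ball x r, nhdsWithin_le_nhds (ball_mem_nhds x hr), hball⟩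
  exact hμ (Measure.measure_univ_eq_zero.1 (measure_null_of_locally_null univ hnull))

end MeasSupport

section ThinAnnuli

lemma ball_diff_singleton_subset_iUnion_ball_diff_ball {X : Type*} [MetricSpace X] (x : X)
    (r : ℝ) : ball x r \ {x} ⊆ ⋃ k : ℕ, ball x (r / 2 ^ k) \ ball x (r / 2 ^ (k + 1)) := by
  rintro y ⟨hy, hyx⟩
  by_contra hnot
  simp only [mem_iUnion, Set.mem_sdiff, mem_ball, not_exists, not_and, not_lt, not_le] at hnot
  have hlt : ∀ k : ℕ, dist y x < r / 2 ^ k := fun k => by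
    induction k with
    | zero => simpa using hy
    | succ k ih => exact hnot k ih
  have hlim : Tendsto (fun k : ℕ => r / 2 ^ k) atTop (𝓝 0) :=
    tendsto_const_nhds.div_atTop (tendsto_pow_atTop_atTop_of_one_lt one_lt_two)
  exact hyx (dist_le_zero.1 (ge_of_tendsto' hlim fun k => (hlt k).le))

variable {X : Type*} [MetricSpace X] [MeasurableSpace X] {μ : Measure X} {α₀ ρ₀ : ℝ}

lemma CondM2With.exists_measure_ball_diff_singleton_le (h : CondM2With μ α₀ ρ₀) :
    ∃ C : ℝ, 0 < C ∧ ∀ (x : X) (r : ℝ), 0 < r → r ≤ ρ₀ →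
      μ (ball x r \ {x}) ≤ ENNReal.ofReal (C * r ^ α₀) := by
  obtain ⟨hα₀, -, C, hC, hann⟩ := h
  set q : ℝ := (2 ^ α₀)⁻¹
  have hq0 : 0 ≤ q := by positivity
  have hq1 : q < 1 := inv_lt_one_of_one_lt₀ (Real.one_lt_rpow one_lt_two hα₀)
  refine ⟨C * (1 - q)⁻¹, by have := sub_pos.2 hq1; positivity, fun x r hr hrρ => ?_⟩
  have hterm : ∀ k : ℕ, μ (ball x (r / 2 ^ k) \ ball x (r / 2 ^ (k + 1))) ≤
      ENNReal.ofReal (C * r ^ α₀ * q ^ k) := fun k => by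
    have hs : 0 < r / 2 ^ (k + 1) := by positivity
    have hsρ : r / 2 ^ (k + 1) ≤ ρ₀ := (div_le_self hr.le (one_le_pow₀ one_le_two)).trans hrρ
    have hdouble : r / 2 ^ (k + 1) + r / 2 ^ (k + 1) = r / 2 ^ k := by ring
    calc _ ≤ ENNReal.ofReal (C * (r / 2 ^ (k + 1)) ^ α₀) := hdouble ▸ hann x _ _ hs le_rfl hsρ
      _ ≤ ENNReal.ofReal (C * (r / 2 ^ k) ^ α₀) := by
          gcongr <;> norm_num
      _ = ENNReal.ofReal (C * r ^ α₀ * q ^ k) := by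
          rw [Real.div_rpow hr.le (by positivity), ← Real.rpow_pow_comm zero_le_two, inv_pow,
            div_eq_mul_inv, mul_assoc]
  calc μ (ball x r \ {x})
      ≤ ∑' k : ℕ, μ (ball x (r / 2 ^ k) \ ball x (r / 2 ^ (k + 1))) :=
        (measure_mono (ball_diff_singleton_subset_iUnion_ball_diff_ball x r)).trans
          (measure_iUnion_le _)
    _ ≤ ∑' k : ℕ, ENNReal.ofReal (C * r ^ α₀ * q ^ k) := ENNReal.tsum_le_tsum hterm
    _ = ENNReal.ofReal (∑' k : ℕ, C * r ^ α₀ * q ^ k) :=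
        (ENNReal.ofReal_tsum_of_nonneg (fun k => by positivity)
          ((summable_geometric_of_lt_one hq0 hq1).mul_left _)).symm
    _ = ENNReal.ofReal (C * (1 - q)⁻¹ * r ^ α₀) := by
        rw [tsum_mul_left, tsum_geometric_of_lt_one hq0 hq1, mul_right_comm]

lemma CondM2With.exists_measure_ball_diff_closedBall_le (h : CondM2With μ α₀ ρ₀) :
    ∃ C : ℝ, 0 < C ∧ ∀ (x : X) (ε r : ℝ), 0 < ε → ε ≤ r → r ≤ ρ₀ →
      μ (ball x r \ closedBall x (r - ε)) ≤ ENNReal.ofReal (C * ε ^ α₀) := by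
  obtain ⟨C', hC', hpunct⟩ := h.exists_measure_ball_diff_singleton_le
  obtain ⟨hα₀, -, C, hC, hann⟩ := h
  refine ⟨C + C' * 2 ^ α₀, by positivity, fun x ε r hε hεr hrρ => ?_⟩
  have hεα : 0 ≤ ε ^ α₀ := by positivity
  rcases le_or_gt ε (r - ε) with hwide | hnarrow
  · have hsub : ball x r \ closedBall x (r - ε) ⊆ ball x (r - ε + ε) \ ball x (r - ε) := by
      rw [sub_add_cancel]
      exact sdiff_subset_sdiff_right ball_subset_closedBall
    calc _ ≤ ENNReal.ofReal (C * ε ^ α₀) :=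
          (measure_mono hsub).trans (hann x ε _ hε hwide (by linarith))
      _ ≤ _ := ENNReal.ofReal_le_ofReal
          (by nlinarith [mul_nonneg (mul_nonneg hC'.le (Real.rpow_nonneg zero_le_two α₀)) hεα])
  · -- here the annulus reaches down to the centre: it lies in a punctured ball of radius `r < 2ε`
    have hsub : ball x r \ closedBall x (r - ε) ⊆ ball x r \ {x} :=
      sdiff_subset_sdiff_right (singleton_subset_iff.2 (mem_closedBall_self (by linarith)))
    have hr2ε : r ^ α₀ ≤ 2 ^ α₀ * ε ^ α₀ := by
      rw [← Real.mul_rpow zero_le_two hε.le]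
      exact Real.rpow_le_rpow (by linarith) (by linarith) hα₀.le
    calc _ ≤ ENNReal.ofReal (C' * r ^ α₀) :=
          (measure_mono hsub).trans (hpunct x r (by linarith) hrρ)
      _ ≤ _ := ENNReal.ofReal_le_ofReal (by nlinarith [mul_nonneg hC.le hεα])

end ThinAnnuli

section HolderNorm

variable {Y : Type*} [MetricSpace Y] {f : Y → ℝ} {C r : ℝ≥0}

lemma isHolderF_of_holderWith (hf : HolderWith C r f) : IsHolderF r f :=
  ⟨C, C.2, fun x y => by simpa only [Real.dist_eq] using hf.dist_le x y⟩

lemma holderNorm_le_of_holderWith {B : ℝ} (hB : 0 ≤ B) (hfB : ∀ y, |f y| ≤ B)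
    (hf : HolderWith C r f) : holderNorm r f ≤ B + C := by
  refine add_le_add (Real.iSup_le hfB hB) (Real.sSup_le ?_ C.2)
  rintro c ⟨x, y, hxy, rfl⟩
  rw [div_le_iff₀ (Real.rpow_pos_of_pos (dist_pos.2 hxy) _)]
  simpa only [Real.dist_eq] using hf.dist_le x y

end HolderNorm

section IndicatorSandwich

variable {Y : Type*}

lemma indic_mono {A B : Set Y} (h : A ⊆ B) (z : Y) : indic A z ≤ indic B z :=
  indicator_le_indicator_of_subset h (fun _ => zero_le_one) z

variable [MeasurableSpace Y] {μ : Measure Y} [IsFiniteMeasure μ]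

lemma abs_integral_sub_measureReal_le_of_indic_le {f : Y → ℝ} {A S B : Set Y}
    (hf : Integrable f μ) (hA : MeasurableSet A) (hB : MeasurableSet B) (hAS : A ⊆ S)
    (hSB : S ⊆ B) (hAf : ∀ z, indic A z ≤ f z) (hfB : ∀ z, f z ≤ indic B z) :
    |∫ z, f z ∂μ - μ.real S| ≤ μ.real (B \ A) := by
  have hlow : μ.real A ≤ ∫ z, f z ∂μ :=
    integral_indicator_one hA ▸ integral_mono ((integrable_const 1).indicator hA) hf hAf
  have hup : ∫ z, f z ∂μ ≤ μ.real B :=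
    integral_indicator_one hB ▸ integral_mono hf ((integrable_const 1).indicator hB) hfB
  have hAS' : μ.real A ≤ μ.real S := measureReal_mono hAS
  have hSB' : μ.real S ≤ μ.real B := measureReal_mono hSB
  rw [measureReal_sdiff (hAS.trans hSB) hA, abs_le]
  constructor <;> linarith

end IndicatorSandwich

section BallBump

variable {X : Type*} [PseudoMetricSpace X] {R : X → ℝ} {ε : ℝ}

def ballBump (R : X → ℝ) (ε : ℝ) (p : X × X) : ℝ :=
  max 0 (min 1 ((R p.1 - dist p.1 p.2) / ε))

lemma ballBump_nonneg (p : X × X) : 0 ≤ ballBump R ε p := le_max_left _ _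

lemma ballBump_le_one (p : X × X) : ballBump R ε p ≤ 1 := max_le zero_le_one (min_le_left _ _)

lemma abs_ballBump_le_one (p : X × X) : |ballBump R ε p| ≤ 1 :=
  abs_le.2 ⟨(neg_nonpos.2 zero_le_one).trans (ballBump_nonneg p), ballBump_le_one p⟩

lemma indic_closedBall_le_ballBump (hε : 0 < ε) (x z : X) :
    indic (closedBall x (R x - ε)) z ≤ ballBump R ε (x, z) := by
  by_cases hz : z ∈ closedBall x (R x - ε)
  · have hone : 1 ≤ (R x - dist x z) / ε := by
      rw [le_div_iff₀ hε, dist_comm]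
      linarith [mem_closedBall.1 hz]
    rw [indic, indicator_of_mem hz, ballBump, min_eq_left hone, max_eq_right zero_le_one]
  · rw [indic, indicator_of_notMem hz]
    exact ballBump_nonneg _

lemma ballBump_le_indic_ball (hε : 0 < ε) (x z : X) :
    ballBump R ε (x, z) ≤ indic (ball x (R x)) z := by
  by_cases hz : z ∈ ball x (R x)
  · rw [indic, indicator_of_mem hz]
    exact ballBump_le_one _
  · rw [indic, indicator_of_notMem hz]
    rw [mem_ball, not_lt] at hz
    have hnonpos : (R x - dist x z) / ε ≤ 0 := by
      rw [dist_comm]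
      exact div_nonpos_of_nonpos_of_nonneg (by linarith) hε.le
    exact max_le le_rfl ((min_le_right _ _).trans hnonpos)

lemma lipschitzWith_ballBump (hR : LipschitzWith 1 R) :
    LipschitzWith (‖ε⁻¹‖₊ * 3) (ballBump R ε) := by
  have hlin : LipschitzWith 3 fun p : X × X => R p.1 - dist p.1 p.2 :=
    ((hR.comp LipschitzWith.prod_fst).sub LipschitzWith.dist).weaken (by norm_num)
  convert (((lipschitzWith_smul ε⁻¹).comp hlin).const_min 1).const_max 0 using 1
  ext p
  simp only [ballBump, Function.comp_apply, smul_eq_mul, div_eq_inv_mul]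

end BallBump

lemma exists_forall_edist_le (Y : Type*) [PseudoMetricSpace Y] [BoundedSpace Y] :
    ∃ D : ℝ≥0, ∀ p q : Y, edist p q ≤ D := by
  obtain ⟨d, hd⟩ := isBounded_iff.1 (Bornology.IsBounded.all (univ : Set Y))
  exact ⟨d.toNNReal, fun p q =>
    (edist_dist p q).trans_le (ENNReal.ofReal_le_ofReal (hd (mem_univ p) (mem_univ q)))⟩

section BallBumpRegularity

variable {X : Type*} [MetricSpace X] {R : X → ℝ} {ε : ℝ}

lemma holderWith_ballBump {D : ℝ≥0} (hD : ∀ p q : X × X, edist p q ≤ D)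
    (hR : LipschitzWith 1 R) {s : ℝ≥0} (hs : s ≤ 1) :
    HolderWith (‖ε⁻¹‖₊ * 3 * D ^ (1 - s : ℝ)) s (ballBump R ε) := by
  simpa using (lipschitzWith_ballBump hR).holderWith.of_le hD hs

lemma holderNorm_ballBump_le {D : ℝ≥0} (hD : ∀ p q : X × X, edist p q ≤ D)
    (hR : LipschitzWith 1 R) (hε : 0 < ε) {s : ℝ≥0} (hs : s ≤ 1) :
    holderNorm s (ballBump R ε) ≤ 1 + 3 * D ^ (1 - s : ℝ) / ε := by
  refine (holderNorm_le_of_holderWith zero_le_one abs_ballBump_le_one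
    (holderWith_ballBump hD hR hs)).trans_eq ?_
  simp [abs_of_pos hε, div_eq_inv_mul, mul_assoc]

lemma integrable_ballBump_slice [MeasurableSpace X] [OpensMeasurableSpace X] {μ : Measure X}
    [IsFiniteMeasure μ] (hR : LipschitzWith 1 R) (x : X) :
    Integrable (fun z => ballBump R ε (x, z)) μ :=
  .of_bound ((lipschitzWith_ballBump hR).continuous.comp
      (Continuous.prodMk_right x)).aestronglyMeasurable 1
    (ae_of_all _ fun z => abs_ballBump_le_one (x, z))

end BallBumpRegularity

theorem holder_approximation_of_balls_general
    {X : Type*} [MetricSpace X] [CompactSpace X]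
    [MeasurableSpace X] [BorelSpace X]
    (μ : Measure X) [IsProbabilityMeasure μ]
    (α₀ ρ₀ : ℝ) (hM2 : CondM2With μ α₀ ρ₀)
    (α : ℝ) (hα : α ∈ Set.Ioc (0 : ℝ) 1) :
    ∃ C : ℝ, 0 < C ∧ ∀ (ε : ℝ) (r : X → ℝ), 0 < ε → LipschitzWith 1 r →
      (∀ x ∈ measSupport μ, ε ≤ r x ∧ r x ≤ ρ₀) →
      -- the outer approximation
      (∃ g : X × X → ℝ, (∀ p, 0 ≤ g p ∧ g p ≤ 1) ∧ IsHolderF α g ∧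
        holderNorm α g ≤ C / ε ∧
        (∀ x z : X, indic (ball x (r x)) z ≤ g (x, z) ∧
          g (x, z) ≤ indic (ball x (r x + ε)) z) ∧
        ∀ x ∈ measSupport μ,
          |(∫ z, g (x, z) ∂μ) - (μ (ball x (r x))).toReal| ≤ C * ε ^ α₀) ∧
      -- the inner approximation
      (∃ g : X × X → ℝ, (∀ p, 0 ≤ g p ∧ g p ≤ 1) ∧ IsHolderF α g ∧
        holderNorm α g ≤ C / ε ∧
        (∀ x z : X, indic (ball x (r x - ε)) z ≤ g (x, z) ∧
          g (x, z) ≤ indic (ball x (r x)) z) ∧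
        ∀ x ∈ measSupport μ,
          |(∫ z, g (x, z) ∂μ) - (μ (ball x (r x))).toReal| ≤ C * ε ^ α₀) := by
  lift α to ℝ≥0 using hα.1.le
  have hα1 : α ≤ 1 := by exact_mod_cast hα.2
  obtain ⟨C₂, hC₂, hinner⟩ := hM2.exists_measure_ball_diff_closedBall_le
  obtain ⟨-, hρ₀, C₁, hC₁, houter⟩ := hM2
  obtain ⟨D, hD⟩ := exists_forall_edist_le (X × X)
  have hK : 0 ≤ 3 * (D : ℝ) ^ (1 - α : ℝ) := by positivity
  set C := ρ₀ + 3 * D ^ (1 - α : ℝ) + C₁ + C₂ with hC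
  refine ⟨C, by positivity, fun ε r hε hr hsupp => ?_⟩
  obtain ⟨x₀, hx₀⟩ := measSupport_nonempty (IsProbabilityMeasure.ne_zero μ)
  -- absorbs the sup-norm part `1` of the Hölder norm into `C / ε`
  have hερ : ε ≤ ρ₀ := (hsupp x₀ hx₀).1.trans (hsupp x₀ hx₀).2
  have hnorm : ∀ R : X → ℝ, LipschitzWith 1 R → holderNorm α (ballBump R ε) ≤ C / ε :=
    fun R hR => (holderNorm_ballBump_le hD hR hε hα1).trans <| by
      rw [one_add_div hε.ne']
      gcongr
      linarith
  have hmeas : ∀ {s : Set X} {c : ℝ}, 0 < c → c ≤ C → μ s ≤ ENNReal.ofReal (c * ε ^ α₀) →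
      μ.real s ≤ C * ε ^ α₀ := fun hc hcC hs =>
    (ENNReal.toReal_le_of_le_ofReal (by positivity) hs).trans (by gcongr)
  have hr' : LipschitzWith 1 fun x => r x + ε := by simpa using hr.add (LipschitzWith.const ε)
  have houter_le : ∀ x z, indic (ball x (r x)) z ≤ ballBump (fun x => r x + ε) ε (x, z) :=
    fun x z => (indic_mono ball_subset_closedBall z).trans
      (by simpa only [add_sub_cancel_right] using
        indic_closedBall_le_ballBump (R := fun x => r x + ε) hε x z)
  refine ⟨⟨ballBump (fun x => r x + ε) ε, fun p => ⟨ballBump_nonneg p, ballBump_le_one p⟩,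
      isHolderF_of_holderWith (holderWith_ballBump hD hr' hα1), hnorm _ hr',
      fun x z => ⟨houter_le x z, ballBump_le_indic_ball hε x z⟩, fun x hx => ?_⟩,
    ⟨ballBump r ε, fun p => ⟨ballBump_nonneg p, ballBump_le_one p⟩,
      isHolderF_of_holderWith (holderWith_ballBump hD hr hα1), hnorm _ hr,
      fun x z => ⟨(indic_mono ball_subset_closedBall z).trans (indic_closedBall_le_ballBump hε x z),
        ballBump_le_indic_ball hε x z⟩, fun x hx => ?_⟩⟩
  · exact (abs_integral_sub_measureReal_le_of_indic_le (integrable_ballBump_slice hr' x)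
      measurableSet_ball measurableSet_ball subset_rfl (ball_subset_ball (by linarith))
      (houter_le x) (ballBump_le_indic_ball hε x)).trans
      (hmeas hC₁ (by linarith) (houter x ε (r x) hε (hsupp x hx).1 (hsupp x hx).2))
  · exact (abs_integral_sub_measureReal_le_of_indic_le (integrable_ballBump_slice hr x)
      measurableSet_closedBall measurableSet_ball (closedBall_subset_ball (by linarith)) subset_rfl
      (indic_closedBall_le_ballBump hε x) (ballBump_le_indic_ball hε x)).trans
      (hmeas hC₂ (by linarith) (hinner x ε (r x) hε (hsupp x hx).1 (hsupp x hx).2))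

/-- **Lemma (Hölder approximation of indicator functions of balls).** -/
theorem holder_approximation_of_balls
    {X : Type*} [MetricSpace X] [CompactSpace X] [Nonempty X]
    [MeasurableSpace X] [BorelSpace X]
    (μ : Measure X) [IsProbabilityMeasure μ]
    (α₀ ρ₀ : ℝ) (hM2 : CondM2With μ α₀ ρ₀)
    (α : ℝ) (hα : α ∈ Set.Ioc (0 : ℝ) 1) :
    ∃ C : ℝ, 0 < C ∧ ∀ (ε : ℝ) (r : X → ℝ), 0 < ε → LipschitzWith 1 r →
      (∀ x ∈ measSupport μ, ε ≤ r x ∧ r x ≤ ρ₀) →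
      -- the outer approximation
      (∃ g : X × X → ℝ, (∀ p, 0 ≤ g p ∧ g p ≤ 1) ∧ IsHolderF α g ∧
        holderNorm α g ≤ C / ε ∧
        (∀ x z : X, indic (ball x (r x)) z ≤ g (x, z) ∧
          g (x, z) ≤ indic (ball x (r x + ε)) z) ∧
        ∀ x ∈ measSupport μ,
          |(∫ z, g (x, z) ∂μ) - (μ (ball x (r x))).toReal| ≤ C * ε ^ α₀) ∧
      -- the inner approximation
      (∃ g : X × X → ℝ, (∀ p, 0 ≤ g p ∧ g p ≤ 1) ∧ IsHolderF α g ∧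
        holderNorm α g ≤ C / ε ∧
        (∀ x z : X, indic (ball x (r x - ε)) z ≤ g (x, z) ∧
          g (x, z) ≤ indic (ball x (r x)) z) ∧
        ∀ x ∈ measSupport μ,
          |(∫ z, g (x, z) ∂μ) - (μ (ball x (r x))).toReal| ≤ C * ε ^ α₀) :=
  holder_approximation_of_balls_general μ α₀ ρ₀ hM2 α hα

end Paper
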